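/- arXiv:1509.09241 — 3 statements merged into one kernel-verified Lean document; each statement's English description precedes it below -/
import Mathlib

section
/- With θ_i = (p_i g_i)/(Σ_{j≠i} p_j g_j + n_A), the powers can be recovered as p_i g_i = (n_A · θ_i/(1+θ_i)) / (1 - Σ_{j∈I} θ_j/(1+θ_j)) for every i ∈ I. -/
/-- With `θ i = p i * g i / (∑_{j ≠ i} p j * g j + nA)`, the powers can
be recovered as `p i * g i = (nA * θ i/(1+θ i)) / (1 - ∑_j θ j/(1+θ j))` for every `i ∈ I`. -/
theorem power_recovery_from_sinr {ι : Type*} [DecidableEq ι] (I : Finset ι)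
    (p g : ι → ℝ) (nA : ℝ)
    (hp : ∀ i ∈ I, 0 ≤ p i) (hg : ∀ i ∈ I, 0 < g i) (hnA : 0 < nA)
    (θ : ι → ℝ)
    (hθ : ∀ i ∈ I, θ i = p i * g i / (∑ j ∈ I.erase i, p j * g j + nA)) :
    ∀ i ∈ I,
      p i * g i = nA * (θ i / (1 + θ i)) / (1 - ∑ j ∈ I, θ j / (1 + θ j)) := by
  set x : ι → ℝ := fun i => p i * g i with hx
  have hx0 : ∀ i ∈ I, 0 ≤ x i := fun i hi => mul_nonneg (hp i hi) (hg i hi).le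
  set T : ℝ := (∑ j ∈ I, x j) + nA with hT
  have hden : ∀ i ∈ I, 0 < (∑ j ∈ I.erase i, x j) + nA := by
    intro i hi
    have : 0 ≤ ∑ j ∈ I.erase i, x j :=
      Finset.sum_nonneg fun j hj => hx0 j (Finset.mem_of_mem_erase hj)
    linarith
  have hTerase : ∀ i ∈ I, (∑ j ∈ I.erase i, x j) + nA = T - x i := by
    intro i hi
    have := Finset.add_sum_erase I x hi
    simp only [hT]; linarith
  have hTpos : 0 < T := by
    have : 0 ≤ ∑ j ∈ I, x j := Finset.sum_nonneg hx0
    simp only [hT]; linarith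
  have hfrac : ∀ i ∈ I, θ i / (1 + θ i) = x i / T := by
    intro i hi
    have hd := hden i hi
    have hθi : θ i = x i / (T - x i) := by rw [hθ i hi, hTerase i hi]
    have hTx : 0 < T - x i := by rw [← hTerase i hi]; exact hd
    rw [hθi]
    have h1 : 1 + x i / (T - x i) = T / (T - x i) := by field_simp; ring
    rw [h1]
    rw [div_div_div_eq]; rw [mul_comm (x i) (T - x i), mul_div_mul_left _ _ hTx.ne']
  have hsum : ∑ j ∈ I, θ j / (1 + θ j) = (∑ j ∈ I, x j) / T := by
    rw [Finset.sum_congr rfl hfrac, Finset.sum_div]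
  intro i hi
  rw [hfrac i hi, hsum]
  have h2 : 1 - (∑ j ∈ I, x j) / T = nA / T := by
    field_simp
    simp only [hT]; ring
  rw [h2]
  field_simp
  rfl
end

section
/- Given any nonnegative SINR targets θ_i (i ∈ I) satisfying Σ_{i∈I} θ_i/(1+θ_i) < 1, the powers p_i = (n_A/g_i)·(θ_i/(1+θ_i))·1/(1 - Σ_{j∈I} θ_j/(1+θ_j)) are nonnegative and achieve exactly the SINRs θ_i, i.e., p_i g_i / (Σ_{j≠i} p_j g_j + n_A) = θ_i for all i. -/
/-- Given nonnegative SINR targets `θ i` with `∑ θ i/(1+θ i) < 1`, the powers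
`p i = (nA / g i) * (θ i/(1+θ i)) * 1/(1 - ∑_j θ j/(1+θ j))` are nonnegative and achieve
exactly the SINRs `θ i`. -/
theorem sinr_targets_achievable {ι : Type*} [DecidableEq ι] (I : Finset ι)
    (g : ι → ℝ) (nA : ℝ) (θ : ι → ℝ)
    (hg : ∀ i ∈ I, 0 < g i) (hnA : 0 < nA)
    (hθ : ∀ i ∈ I, 0 ≤ θ i)
    (hsum : ∑ i ∈ I, θ i / (1 + θ i) < 1)
    (p : ι → ℝ)
    (hp : ∀ i ∈ I, p i =
      (nA / g i) * (θ i / (1 + θ i)) * (1 / (1 - ∑ j ∈ I, θ j / (1 + θ j)))) :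
    ∀ i ∈ I, 0 ≤ p i ∧
      p i * g i / (∑ j ∈ I.erase i, p j * g j + nA) = θ i := by
  intro i hi
  set S := ∑ j ∈ I, θ j / (1 + θ j) with hS
  have hD : 0 < 1 - S := by linarith
  have hθi := hθ i hi
  have h1θ : 0 < 1 + θ i := by linarith
  have hgi := hg i hi
  have hpg : ∀ j ∈ I, p j * g j = nA * (θ j / (1 + θ j)) / (1 - S) := by
    intro j hj
    have h1 : (1 : ℝ) + θ j ≠ 0 := by have := hθ j hj; positivity
    rw [hp j hj]
    field_simp [(hg j hj).ne']
  have hsum_erase : ∑ j ∈ I.erase i, p j * g j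
      = nA * (S - θ i / (1 + θ i)) / (1 - S) := by
    rw [Finset.sum_congr rfl (fun j hj => hpg j (Finset.mem_of_mem_erase hj))]
    rw [show (fun j => nA * (θ j / (1 + θ j)) / (1 - S))
        = fun j => (nA / (1 - S)) * (θ j / (1 + θ j)) by funext j; ring]
    rw [← Finset.mul_sum, Finset.sum_erase_eq_sub hi, ← hS]
    ring
  have hden : nA * (S - θ i / (1 + θ i)) / (1 - S) + nA
      = nA / ((1 + θ i) * (1 - S)) := by
    field_simp
    ring
  constructor
  · rw [hp i hi]
    have : 0 ≤ θ i / (1 + θ i) := div_nonneg hθi h1θ.le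
    positivity
  · rw [hsum_erase, hden, hpg i hi]
    rw [div_eq_iff (by positivity : nA / ((1 + θ i) * (1 - S)) ≠ 0)]
    field_simp
end

section
/- Under Conditions (C1): Σ_{i∈I} 2^{-R_i/W} > I−1, and (C2): (n_A/g_{iA})(1 − 2^{−R_i/W}) / (Σ_{j∈I} 2^{−R_j/W} − I + 1) ≤ min{P_i^max, P_{iA}^max} for all i, the assignment θ_i* = 2^{R_i/W} − 1 is feasible for the SINR problem: the induced powers p_{iA} = (n_A/g_{iA})·(θ_i*/(1+θ_i*))·1/(1 − Σ_j θ_j*/(1+θ_j*)) satisfy 0 ≤ p_{iA} ≤ min{P_{iA}^max, P_i^max} for each i. -/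
/-- Under Conditions (C1) and (C2), the complete-offloading SINR assignment
`θ* i = 2^{R i/W} - 1` induces powers
`p i = (nA/g i)·(θ* i/(1+θ* i))·1/(1 − ∑_j θ* j/(1+θ* j))` satisfying
`0 ≤ p i ≤ min (PA i) (P i)` for each `i ∈ I`. -/
theorem complete_offloading_feasible {ι : Type*} (I : Finset ι)
    (R : ι → ℝ) (W nA : ℝ) (g PA P : ι → ℝ)
    (hR : ∀ i ∈ I, 0 < R i) (hW : 0 < W) (hnA : 0 < nA)
    (hg : ∀ i ∈ I, 0 < g i) (hPA : ∀ i ∈ I, 0 < PA i) (hP : ∀ i ∈ I, 0 < P i)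
    (hC1 : ∑ i ∈ I, (2 : ℝ) ^ (-(R i) / W) > (I.card : ℝ) - 1)
    (hC2 : ∀ i ∈ I,
      (nA / g i) * (1 - (2 : ℝ) ^ (-(R i) / W)) /
        (∑ j ∈ I, (2 : ℝ) ^ (-(R j) / W) - (I.card : ℝ) + 1) ≤ min (P i) (PA i))
    (θ : ι → ℝ) (hθ : ∀ i ∈ I, θ i = (2 : ℝ) ^ (R i / W) - 1)
    (p : ι → ℝ)
    (hp : ∀ i ∈ I, p i =
      (nA / g i) * (θ i / (1 + θ i)) * (1 / (1 - ∑ j ∈ I, θ j / (1 + θ j)))) :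
    ∀ i ∈ I, 0 ≤ p i ∧ p i ≤ min (PA i) (P i) := by
  -- key rewriting: θ i/(1+θ i) = 1 - 2^(-(R i)/W)
  have key : ∀ i ∈ I, θ i / (1 + θ i) = 1 - (2 : ℝ) ^ (-(R i) / W) := by
    intro i hi
    have ha : (0 : ℝ) < (2 : ℝ) ^ (R i / W) := Real.rpow_pos_of_pos (by norm_num) _
    have hneg : (2 : ℝ) ^ (-(R i) / W) = ((2 : ℝ) ^ (R i / W))⁻¹ := by
      rw [neg_div, Real.rpow_neg (by norm_num)]
    rw [hθ i hi, hneg]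
    field_simp
    rw [show (1 + ((2:ℝ) ^ (R i / W) - 1)) = (2:ℝ) ^ (R i / W) by ring]
    exact mul_div_cancel_left₀ _ ha.ne'
  have hsum : ∑ j ∈ I, θ j / (1 + θ j)
      = (I.card : ℝ) - ∑ j ∈ I, (2 : ℝ) ^ (-(R j) / W) := by
    rw [Finset.sum_congr rfl key, Finset.sum_sub_distrib]
    simp
  have hden : (0 : ℝ) < 1 - ∑ j ∈ I, θ j / (1 + θ j) := by
    rw [hsum]; linarith
  have hden' : 1 - ∑ j ∈ I, θ j / (1 + θ j)
      = ∑ j ∈ I, (2 : ℝ) ^ (-(R j) / W) - (I.card : ℝ) + 1 := by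
    rw [hsum]; ring
  intro i hi
  have hfrac : (0 : ℝ) ≤ 1 - (2 : ℝ) ^ (-(R i) / W) := by
    have h1 : -(R i) / W ≤ 0 :=
      div_nonpos_of_nonpos_of_nonneg (by linarith [hR i hi]) hW.le
    have : (2 : ℝ) ^ (-(R i) / W) ≤ (2 : ℝ) ^ (0 : ℝ) :=
      Real.rpow_le_rpow_of_exponent_le (by norm_num) h1
    simpa using this
  have hpi : p i = (nA / g i) * (1 - (2 : ℝ) ^ (-(R i) / W)) /
      (∑ j ∈ I, (2 : ℝ) ^ (-(R j) / W) - (I.card : ℝ) + 1) := by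
    rw [hp i hi, key i hi, hden']; ring
  constructor
  · rw [hpi]
    have h1 : (0:ℝ) < nA / g i := div_pos hnA (hg i hi)
    have h2 : (0:ℝ) < ∑ j ∈ I, (2 : ℝ) ^ (-(R j) / W) - (I.card : ℝ) + 1 := by
      linarith
    positivity
  · rw [hpi, min_comm]
    exact hC2 i hi
end
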